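/- arXiv:2004.10227 — 2 statements merged into one kernel-verified Lean document; each statement's English description precedes it below -/
import Mathlib

section
/- Let Q be a quandle and U = {Q_i} an orbit series of Q. Then U is the principal orbit series of an element x if and only if x ∈ ⋂_{i∈ℕ} Q_i. In particular, if x lies in ⋂ Q_i, then Orb(x, Q_i) = Q_{i+1} for all i. -/
/-- One step of the action generating the orbit: `q` is obtained from `p` by applying a
left translation by an element of `S`, or its inverse. -/
def orbRel {Q : Type*} (op : Q → Q → Q) (S : Set Q) (p q : Q) : Prop :=
  ∃ s ∈ S, q = op s p ∨ p = op s q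

/-- The orbit of `x` in the subquandle `S`: all elements reachable from `x` under the
group generated by the left translations by elements of `S` (and their inverses). -/
def OrbIn {Q : Type*} (op : Q → Q → Q) (S : Set Q) (x : Q) : Set Q :=
  {y | Relation.ReflTransGen (orbRel op S) x y}

/-- An orbit series starting at the subquandle `S`: a chain `S = Q₀ ≥ Q₁ ≥ …` where
`Q_{i+1} = Orb(x_i, Q_i)` is the orbit of the chosen element `x_i ∈ Q_i`. -/
def IsOrbitSeriesFrom {Q : Type*} (op : Q → Q → Q) (S : Set Q)
    (Qs : ℕ → Set Q) (xs : ℕ → Q) : Prop :=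
  Qs 0 = S ∧ ∀ i, xs i ∈ Qs i ∧ Qs (i + 1) = OrbIn op (Qs i) (xs i)

instance orbRel.instSymm {Q : Type*} (op : Q → Q → Q) (S : Set Q) :
    Std.Symm (orbRel op S) where
  symm _ _ := fun ⟨s, hs, h⟩ => ⟨s, hs, h.symm⟩

theorem orbIn_eq_of_mem {Q : Type*} {op : Q → Q → Q} {S : Set Q} {x y : Q}
    (hy : y ∈ OrbIn op S x) : OrbIn op S y = OrbIn op S x := by
  ext z
  exact ⟨fun hz => Relation.ReflTransGen.trans hy hz,
    fun hz => (Std.Symm.symm _ _ hy).trans hz⟩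

theorem principal_iff_mem_inter_general {Q : Type*} (op : Q → Q → Q)
    (Qs : ℕ → Set Q) (xs : ℕ → Q)
    (hser : IsOrbitSeriesFrom op Set.univ Qs xs) (x : Q) :
    IsOrbitSeriesFrom op Set.univ Qs (fun _ => x) ↔ ∀ i, x ∈ Qs i := by
  obtain ⟨h0, hstep⟩ := hser
  refine ⟨fun h i => (h.2 i).1, fun hx => ⟨h0, fun i => ⟨hx i, ?_⟩⟩⟩
  have hx_orb : x ∈ OrbIn op (Qs i) (xs i) := (hstep i).2 ▸ hx (i + 1)
  rw [(hstep i).2, orbIn_eq_of_mem hx_orb]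

/-- Let `Q` be a quandle and `{Q_i}` an orbit series of `Q`. Then the series is the
principal orbit series of an element `x` (i.e., it arises from the constant sequence
`x_i = x`) if and only if `x ∈ ⋂ᵢ Q_i`. In particular, if `x` lies in all the `Q_i`,
then `Orb(x, Q_i) = Q_{i+1}` for all `i`. -/
theorem principal_iff_mem_inter {Q : Type*} (op : Q → Q → Q)
    (hidem : ∀ a, op a a = a)
    (hbij : ∀ a, Function.Bijective (op a))
    (hdist : ∀ a b c, op a (op b c) = op (op a b) (op a c))
    (Qs : ℕ → Set Q) (xs : ℕ → Q)
    (hser : IsOrbitSeriesFrom op Set.univ Qs xs) (x : Q) :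
    IsOrbitSeriesFrom op Set.univ Qs (fun _ => x) ↔ ∀ i, x ∈ Qs i :=
  principal_iff_mem_inter_general op Qs xs hser x
end

section
/- A quandle Q belongs to tOS (every orbit series stabilizes at a one-element quandle) if and only if Q satisfies the descending orbit series condition (every orbit series stabilizes) and Q has no non-trivial connected subquandles. -/
/-!
Every term of an orbit series is a subquandle, so a series that stabilizes, `Q_{k+1} = Q_k`,
ends in a connected subquandle; if there are no non-trivial ones, it ends in a point.
Conversely, a point is its own orbit (idempotence and injectivity of the translations), so a
series reaching a point stabilizes; and if `S` is connected with `S = Orb(x, S)`, the series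
that always picks `x` contains `S` at every step, so it can only reach a point if `S` is one.
-/

structure IsSubquandle {Q : Type*} (op : Q → Q → Q) (S : Set Q) : Prop where
  op_mem : ∀ a ∈ S, ∀ b ∈ S, op a b ∈ S
  mem_of_op_mem : ∀ a ∈ S, ∀ b ∈ S, ∀ c, op a c = b → c ∈ S

theorem isSubquandle_univ {Q : Type*} (op : Q → Q → Q) : IsSubquandle op Set.univ :=
  ⟨fun _ _ _ _ => trivial, fun _ _ _ _ _ _ => trivial⟩

section OrbIn

variable {Q : Type*} (op : Q → Q → Q)

theorem self_mem_orbIn (S : Set Q) (x : Q) : x ∈ OrbIn op S x :=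
  Relation.ReflTransGen.refl

theorem orbIn_mono {S T : Set Q} (h : S ⊆ T) (x : Q) : OrbIn op S x ⊆ OrbIn op T x :=
  fun _ => Relation.ReflTransGen.mono (fun _ _ ⟨s, hs, hc⟩ => ⟨s, h hs, hc⟩) _ _

variable {op}

theorem IsSubquandle.orbIn_subset {S : Set Q} (hS : IsSubquandle op S) {x : Q} (hx : x ∈ S) :
    OrbIn op S x ⊆ S := by
  intro y hy
  induction hy with
  | refl => exact hx
  | tail _ hstep ih =>
    obtain ⟨s, hs, rfl | hc⟩ := hstep
    · exact hS.op_mem s hs _ ih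
    · exact hS.mem_of_op_mem s hs _ ih _ hc.symm

theorem IsSubquandle.orbIn {S : Set Q} (hS : IsSubquandle op S) {x : Q} (hx : x ∈ S) :
    IsSubquandle op (OrbIn op S x) where
  op_mem a ha _ hb := hb.tail ⟨a, hS.orbIn_subset hx ha, Or.inl rfl⟩
  mem_of_op_mem a ha _ hb _ hc := hb.tail ⟨a, hS.orbIn_subset hx ha, Or.inr hc.symm⟩

theorem orbIn_singleton_self (hidem : ∀ a, op a a = a)
    (hinj : ∀ a, Function.Injective (op a)) (a : Q) : OrbIn op {a} a = {a} := by
  refine Set.Subset.antisymm (fun y hy => ?_) (Set.singleton_subset_iff.2 (self_mem_orbIn op _ a))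
  induction hy with
  | refl => rfl
  | tail _ hstep ih =>
    obtain ⟨s, hs, hc⟩ := hstep
    rw [Set.mem_singleton_iff] at hs ih ⊢
    subst hs ih
    rcases hc with rfl | hc
    · exact hidem _
    · exact hinj _ (hc.symm.trans (hidem _).symm)

end OrbIn

section OrbitSeries

variable {Q : Type*} {op : Q → Q → Q} {Qs : ℕ → Set Q} {xs : ℕ → Q}

theorem IsOrbitSeriesFrom.isSubquandle {S : Set Q} (hser : IsOrbitSeriesFrom op S Qs xs)
    (hS : IsSubquandle op S) (n : ℕ) : IsSubquandle op (Qs n) := by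
  induction n with
  | zero => exact hser.1 ▸ hS
  | succ n ih => exact (hser.2 n).2 ▸ ih.orbIn (hser.2 n).1

theorem IsOrbitSeriesFrom.succ_eq_of_eq_singleton {S : Set Q}
    (hser : IsOrbitSeriesFrom op S Qs xs) (hidem : ∀ a, op a a = a)
    (hinj : ∀ a, Function.Injective (op a)) {k : ℕ} {a : Q} (hk : Qs k = {a}) :
    Qs (k + 1) = Qs k := by
  have hxs : xs k = a := by simpa [hk] using (hser.2 k).1
  rw [(hser.2 k).2, hk, hxs, orbIn_singleton_self hidem hinj]

def constOrbitSeries (op : Q → Q → Q) (S : Set Q) (x : Q) (n : ℕ) : Set Q :=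
  (fun T => OrbIn op T x)^[n] S

theorem constOrbitSeries_succ (S : Set Q) (x : Q) (n : ℕ) :
    constOrbitSeries op S x (n + 1) = OrbIn op (constOrbitSeries op S x n) x :=
  Function.iterate_succ_apply' _ n S

theorem isOrbitSeriesFrom_constOrbitSeries {S : Set Q} {x : Q} (hx : x ∈ S) :
    IsOrbitSeriesFrom op S (constOrbitSeries op S x) (fun _ => x) := by
  refine ⟨rfl, fun i => ⟨?_, constOrbitSeries_succ S x i⟩⟩
  cases i with
  | zero => exact hx
  | succ i => exact constOrbitSeries_succ S x i ▸ self_mem_orbIn op _ x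

theorem subset_constOrbitSeries {S T : Set Q} {x : Q} (hTS : T ⊆ S)
    (hT : OrbIn op T x = T) (n : ℕ) : T ⊆ constOrbitSeries op S x n := by
  induction n with
  | zero => exact hTS
  | succ n ih => exact constOrbitSeries_succ S x n ▸ hT ▸ orbIn_mono op ih x

end OrbitSeries

theorem tOS_iff_OS_and_no_connected_general {Q : Type*} (op : Q → Q → Q)
    (hidem : ∀ a, op a a = a)
    (hbij : ∀ a, Function.Bijective (op a)) :
    (∀ Qs xs, IsOrbitSeriesFrom op Set.univ Qs xs → ∃ k, ∃ a : Q, Qs k = {a}) ↔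
      ((∀ Qs xs, IsOrbitSeriesFrom op Set.univ Qs xs → ∃ k, Qs (k + 1) = Qs k) ∧
        (∀ S : Set Q, (∀ a ∈ S, ∀ b ∈ S, op a b ∈ S) →
          (∀ a ∈ S, ∀ b ∈ S, ∀ c, op a c = b → c ∈ S) →
          (∃ x ∈ S, OrbIn op S x = S) → S.Subsingleton)) := by
  have hinj : ∀ a, Function.Injective (op a) := fun a => (hbij a).1
  constructor
  · intro htos
    refine ⟨fun Qs xs hser => ?_, fun S _ _ ⟨x, _, hS⟩ => ?_⟩
    · obtain ⟨k, a, hk⟩ := htos Qs xs hser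
      exact ⟨k, hser.succ_eq_of_eq_singleton hidem hinj hk⟩
    · obtain ⟨k, a, hk⟩ := htos _ _ (isOrbitSeriesFrom_constOrbitSeries (Set.mem_univ x))
      exact Set.subsingleton_singleton.anti
        (hk ▸ subset_constOrbitSeries (Set.subset_univ S) hS k)
  · rintro ⟨hos, hconn⟩ Qs xs hser
    obtain ⟨k, hk⟩ := hos Qs xs hser
    have hQk := hser.isSubquandle (isSubquandle_univ op) k
    have hsub := hconn _ hQk.op_mem hQk.mem_of_op_mem ⟨xs k, (hser.2 k).1, (hser.2 k).2 ▸ hk⟩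
    exact ⟨k, xs k, hsub.eq_singleton_of_mem (hser.2 k).1⟩

/-- A quandle `Q` belongs to `tOS` (every orbit series stabilizes at a one-element
quandle) if and only if `Q` satisfies the descending orbit series condition (every
orbit series stabilizes) and `Q` has no non-trivial connected subquandles. -/
theorem tOS_iff_OS_and_no_connected {Q : Type*} (op : Q → Q → Q)
    (hidem : ∀ a, op a a = a)
    (hbij : ∀ a, Function.Bijective (op a))
    (hdist : ∀ a b c, op a (op b c) = op (op a b) (op a c)) :
    (∀ Qs xs, IsOrbitSeriesFrom op Set.univ Qs xs → ∃ k, ∃ a : Q, Qs k = {a}) ↔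
      ((∀ Qs xs, IsOrbitSeriesFrom op Set.univ Qs xs → ∃ k, Qs (k + 1) = Qs k) ∧
        (∀ S : Set Q, (∀ a ∈ S, ∀ b ∈ S, op a b ∈ S) →
          (∀ a ∈ S, ∀ b ∈ S, ∀ c, op a c = b → c ∈ S) →
          (∃ x ∈ S, OrbIn op S x = S) → S.Subsingleton)) :=
  tOS_iff_OS_and_no_connected_general op hidem hbij
end
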